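/- arXiv:1805.10371 — 5 statements merged into one kernel-verified Lean document; each statement's English description precedes it below -/
import Mathlib

section
/- If x₁ and x₂ are both complex-balanced steady states of the same mass-action system, then the vector (ln x₂ − ln x₁) (componentwise logarithm) is orthogonal to every reaction vector y' − y; in particular ln x₂ − ln x₁ ∈ S^⊥ where S is the stoichiometric subspace. (It suffices to prove orthogonality to each reaction vector assuming the classical equilibrium description.) -/
/-!
Let `a r = k r * x₁ ^ src r > 0` and `g y = ⟪ln x₂ - ln x₁, y⟫`, so that the flux of `x₂`
is `a r * exp (g (src r))`. Complex balance lets one replace `φ (src r)` by `φ (tgt r)` in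
any flux-weighted sum. For the flux of `x₁` and `φ = g` this gives `∑ a r * b r = 0`, where
`b r = g (tgt r) - g (src r)`; for the flux of `x₂` and `φ = exp ∘ (-g)` it gives
`∑ a r * exp (-b r) = ∑ a r`. Hence `∑ a r * (exp (-b r) - 1 + b r) = 0`, a sum of
nonnegative terms which vanish only where `b r = 0`, because `exp t > 1 + t` for `t ≠ 0`.
-/

open Finset Real

lemma eq_zero_of_sum_mul_eq_zero_of_sum_mul_exp_neg_eq {ι : Type*} [Fintype ι] {a b : ι → ℝ}
    (ha : ∀ i, 0 < a i) (hab : ∑ i, a i * b i = 0) (hexp : ∑ i, a i * exp (-b i) = ∑ i, a i)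
    (i : ι) : b i = 0 := by
  have hsum : ∑ j, a j * (exp (-b j) - 1 + b j) = 0 := by
    simp only [mul_add, mul_sub, mul_one, sum_add_distrib, sum_sub_distrib, hexp, hab]
    ring
  have hnonneg : ∀ j ∈ univ, 0 ≤ a j * (exp (-b j) - 1 + b j) := fun j _ =>
    mul_nonneg (ha j).le (by linarith [add_one_le_exp (-b j)])
  have hi := (sum_eq_zero_iff_of_nonneg hnonneg).1 hsum i (mem_univ i)
  by_contra hne
  have := add_one_lt_exp (neg_ne_zero.2 hne)
  nlinarith [ha i]

section ComplexBalance

variable {R C : Type*} [Fintype R] [DecidableEq C]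

/-- `F r` is the flux through reaction `r`: at every complex, outflow equals inflow. -/
def IsComplexBalanced (src tgt : R → C) (F : R → ℝ) : Prop :=
  ∀ y, ∑ r, (if src r = y then F r else 0) = ∑ r, (if tgt r = y then F r else 0)

lemma sum_mul_comp_eq_sum_fiber (f : R → C) (F : R → ℝ) (φ : C → ℝ) {T : Finset C}
    (hT : ∀ r, f r ∈ T) :
    ∑ r, F r * φ (f r) = ∑ y ∈ T, (∑ r, if f r = y then F r else 0) * φ y := by
  rw [← sum_fiberwise_of_maps_to (fun r _ => hT r)]
  refine sum_congr rfl fun y _ => ?_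
  rw [← sum_filter, sum_mul]
  exact sum_congr rfl fun r hr => by rw [(mem_filter.1 hr).2]

lemma IsComplexBalanced.sum_mul_src_eq_sum_mul_tgt {src tgt : R → C} {F : R → ℝ}
    (hF : IsComplexBalanced src tgt F) (φ : C → ℝ) :
    ∑ r, F r * φ (src r) = ∑ r, F r * φ (tgt r) := by
  set T := univ.image src ∪ univ.image tgt
  have hsrc : ∀ r, src r ∈ T := fun r => mem_union_left _ (mem_image_of_mem _ (mem_univ r))
  have htgt : ∀ r, tgt r ∈ T := fun r => mem_union_right _ (mem_image_of_mem _ (mem_univ r))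
  rw [sum_mul_comp_eq_sum_fiber src F φ hsrc, sum_mul_comp_eq_sum_fiber tgt F φ htgt]
  exact sum_congr rfl fun y _ => by rw [hF y]

theorem IsComplexBalanced.apply_tgt_eq_apply_src {src tgt : R → C} {a : R → ℝ}
    (ha : ∀ r, 0 < a r) {g : C → ℝ}
    (h₁ : IsComplexBalanced src tgt a)
    (h₂ : IsComplexBalanced src tgt fun r => a r * exp (g (src r))) (r : R) :
    g (tgt r) = g (src r) := by
  have hab : ∑ r, a r * (g (tgt r) - g (src r)) = 0 := by
    simp only [mul_sub, sum_sub_distrib, h₁.sum_mul_src_eq_sum_mul_tgt g, sub_self]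
  have hexp : ∑ r, a r * exp (-(g (tgt r) - g (src r))) = ∑ r, a r := by
    have := h₂.sum_mul_src_eq_sum_mul_tgt fun y => exp (-g y)
    simp only [mul_assoc, ← exp_add, add_neg_cancel, exp_zero, mul_one] at this
    rw [this]
    exact sum_congr rfl fun r _ => by ring_nf
  exact sub_eq_zero.1 (eq_zero_of_sum_mul_eq_zero_of_sum_mul_exp_neg_eq ha hab hexp r)

end ComplexBalance

lemma mem_orthogonal_span_of_inner_eq_zero {E : Type*} [NormedAddCommGroup E]
    [InnerProductSpace ℝ E] {s : Set E} {v : E} (h : ∀ u ∈ s, inner ℝ v u = 0) :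
    v ∈ (Submodule.span ℝ s)ᗮ :=
  Submodule.isOrtho_span.2 (fun _ hw u hu => hw ▸ h u hu) (Submodule.subset_span rfl)

lemma prod_rpow_eq_prod_rpow_mul_exp {ι : Type*} [Fintype ι] {x x' : ι → ℝ}
    (hx : ∀ i, 0 < x i) (hx' : ∀ i, 0 < x' i) (y : ι → ℝ) :
    ∏ i, x' i ^ y i = (∏ i, x i ^ y i) * exp (∑ i, (log (x' i) - log (x i)) * y i) := by
  simp only [rpow_def_of_pos (hx _), rpow_def_of_pos (hx' _), ← exp_sum, ← exp_add,
    ← sum_add_distrib]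
  congr 2 with i
  ring

open Classical in
/-- If `x₁` and `x₂` are both complex-balanced steady states of the same mass-action
system, then `ln x₂ − ln x₁` is orthogonal to every reaction vector `y' − y`; in
particular `ln x₂ − ln x₁ ∈ Sᗮ`, where `S` is the stoichiometric subspace. -/
theorem complex_balanced_log_difference_orthogonal
    {n : ℕ} {R : Type*} [Fintype R]
    (src tgt : R → EuclideanSpace ℝ (Fin n)) (k : R → ℝ) (hk : ∀ r, 0 < k r)
    (x₁ x₂ : EuclideanSpace ℝ (Fin n)) (hx₁ : ∀ i, 0 < x₁ i) (hx₂ : ∀ i, 0 < x₂ i)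
    (hcb₁ : ∀ y : EuclideanSpace ℝ (Fin n),
      ∑ r, (if src r = y then k r * ∏ i, x₁ i ^ (src r i) else 0)
        = ∑ r, (if tgt r = y then k r * ∏ i, x₁ i ^ (src r i) else 0))
    (hcb₂ : ∀ y : EuclideanSpace ℝ (Fin n),
      ∑ r, (if src r = y then k r * ∏ i, x₂ i ^ (src r i) else 0)
        = ∑ r, (if tgt r = y then k r * ∏ i, x₂ i ^ (src r i) else 0)) :
    (∀ r, ∑ i, (Real.log (x₂ i) - Real.log (x₁ i)) * (tgt r i - src r i) = 0) ∧
    (show EuclideanSpace ℝ (Fin n) from WithLp.toLp 2 (fun i => Real.log (x₂ i) - Real.log (x₁ i))) ∈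
      (Submodule.span ℝ {v : EuclideanSpace ℝ (Fin n) | ∃ r, v = tgt r - src r})ᗮ := by
  set g : EuclideanSpace ℝ (Fin n) → ℝ := fun y => ∑ i, (log (x₂ i) - log (x₁ i)) * y i
  have hflux₂ : (fun r => k r * ∏ i, x₂ i ^ (src r i))
      = fun r => (k r * ∏ i, x₁ i ^ (src r i)) * exp (g (src r)) := by
    ext r
    rw [prod_rpow_eq_prod_rpow_mul_exp hx₁ hx₂, mul_assoc]
  have hg : ∀ r, g (tgt r) = g (src r) :=
    IsComplexBalanced.apply_tgt_eq_apply_src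
      (fun r => mul_pos (hk r) (prod_pos fun i _ => rpow_pos_of_pos (hx₁ i) _)) hcb₁
      (hflux₂ ▸ hcb₂)
  have horth : ∀ r, ∑ i, (log (x₂ i) - log (x₁ i)) * (tgt r i - src r i) = 0 := fun r => by
    simp only [mul_sub, sum_sub_distrib]
    exact sub_eq_zero.2 (hg r)
  refine ⟨horth, mem_orthogonal_span_of_inner_eq_zero ?_⟩
  rintro _ ⟨r, rfl⟩
  simpa [PiLp.inner_apply, mul_comm] using horth r
end

section
/- If x* is a complex-balanced steady state and x ∈ ℝ^n_{>0} satisfies ⟨ln x − ln x*, y' − y⟩ = 0 for every reaction y → y', then x is also a complex-balanced steady state. -/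
open Classical in
/-- If `x*` is complex-balanced and `ln x − ln x*` is orthogonal to every reaction vector,
then `x` is complex-balanced as well. -/
theorem orthogonal_log_shift_of_complex_balanced_is_complex_balanced
    {n : ℕ} {R : Type*} [Fintype R]
    (src tgt : R → (Fin n → ℝ)) (k : R → ℝ) (hk : ∀ r, 0 < k r)
    (xstar : Fin n → ℝ) (hxstar : ∀ i, 0 < xstar i)
    (hcb : ∀ y : Fin n → ℝ,
      ∑ r, (if src r = y then k r * ∏ i, xstar i ^ (src r i) else 0)
        = ∑ r, (if tgt r = y then k r * ∏ i, xstar i ^ (src r i) else 0))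
    (x : Fin n → ℝ) (hx : ∀ i, 0 < x i)
    (horth : ∀ r, ∑ i, (Real.log (x i) - Real.log (xstar i)) * (tgt r i - src r i) = 0) :
    ∀ y : Fin n → ℝ,
      ∑ r, (if src r = y then k r * ∏ i, x i ^ (src r i) else 0)
        = ∑ r, (if tgt r = y then k r * ∏ i, x i ^ (src r i) else 0) := by
  set c : (Fin n → ℝ) → ℝ :=
    fun y => Real.exp (∑ i, (Real.log (x i) - Real.log (xstar i)) * y i) with hc
  have hprod : ∀ y : Fin n → ℝ, (∏ i, x i ^ (y i)) = c y * ∏ i, xstar i ^ (y i) := by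
    intro y
    have h1 : ∀ i, x i ^ (y i) = Real.exp ((Real.log (x i) - Real.log (xstar i)) * y i)
        * xstar i ^ (y i) := by
      intro i
      rw [Real.rpow_def_of_pos (hx i), Real.rpow_def_of_pos (hxstar i), ← Real.exp_add]
      ring_nf
    simp only [h1]
    rw [Finset.prod_mul_distrib, ← Real.exp_sum, hc]
  have hceq : ∀ r, c (src r) = c (tgt r) := by
    intro r
    simp only [hc]
    congr 1
    have h2 : (∑ i, (Real.log (x i) - Real.log (xstar i)) * tgt r i)
        - (∑ i, (Real.log (x i) - Real.log (xstar i)) * src r i) = 0 := by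
      rw [← Finset.sum_sub_distrib, ← horth r]
      congr 1; ext i; ring
    linarith
  intro y
  have hL : ∑ r, (if src r = y then k r * ∏ i, x i ^ (src r i) else 0)
      = c y * ∑ r, (if src r = y then k r * ∏ i, xstar i ^ (src r i) else 0) := by
    rw [Finset.mul_sum]
    apply Finset.sum_congr rfl
    intro r _
    by_cases h : src r = y
    · subst h; simp only [if_true]
      rw [hprod (src r)]; ring
    · simp [h]
  have hR : ∑ r, (if tgt r = y then k r * ∏ i, x i ^ (src r i) else 0)
      = c y * ∑ r, (if tgt r = y then k r * ∏ i, xstar i ^ (src r i) else 0) := by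
    rw [Finset.mul_sum]
    apply Finset.sum_congr rfl
    intro r _
    by_cases h : tgt r = y
    · subst h; simp only [if_true]
      rw [hprod (src r), hceq r]; ring
    · simp [h]
  rw [hL, hR, hcb y]
end

section
/- The determinant of the Jacobian matrix of the right-hand side of system (N4) equals −(k₄k₆k₈ + k₂k₄k₆ + k₁k₄k₈x₁ + k₁k₆k₈x₂ + k₃k₆k₈ + k₂k₃k₆ + 3k₁k₃k₈x₁), and in particular is strictly negative for all x ∈ ℝ³_{>0} and all positive rate constants k₁,…,k₉. -/
/-!
The right-hand side of (N4) is affine in `x` except for the mass-action term `k₁ x₁ x₂` of the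
reaction `X₁ + X₂ → X₃`, which enters with stoichiometric vector `ν = (-1, -1, 1)`. Its Jacobian
is therefore the linear part plus the rank-one matrix `k₁ ν (x₂, x₁, 0)ᵀ`, and expanding the
`3 × 3` determinant every monomial comes with a minus sign.
-/

open Matrix

theorem jacobian_eq_of_hasFDerivAt {m n : Type*} [Fintype n] [DecidableEq n]
    {F : (n → ℝ) → (m → ℝ)} {A : Matrix m n ℝ} {x : n → ℝ}
    (h : HasFDerivAt F (LinearMap.toContinuousLinearMap (toLin' A)) x) :
    (Matrix.of fun i j => fderiv ℝ F x (Pi.single j 1) i) = A := by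
  ext i j
  simp [h.fderiv]

theorem hasFDerivAt_mulVec_add_bimolecular {m n : Type*} [Fintype m] [Fintype n]
    [DecidableEq n] (c ν : m → ℝ) (A : Matrix m n ℝ) (k : ℝ) (p q : n) (x : n → ℝ) :
    HasFDerivAt (fun y => c + A *ᵥ y + (k * (y p * y q)) • ν)
      (LinearMap.toContinuousLinearMap
        (toLin' (A + k • vecMulVec ν (x q • Pi.single p 1 + x p • Pi.single q 1)))) x := by
  have hA : HasFDerivAt (fun y => A *ᵥ y) (LinearMap.toContinuousLinearMap (toLin' A)) x :=
    (LinearMap.toContinuousLinearMap (toLin' A)).hasFDerivAt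
  have hpq := (hasFDerivAt_apply (𝕜 := ℝ) p x).mul (hasFDerivAt_apply (𝕜 := ℝ) q x)
  refine (((hasFDerivAt_const c x).add hA).add ((hpq.const_mul k).smul_const ν)).congr_fderiv ?_
  ext v i
  simp [vecMulVec_mulVec]
  ring

theorem jacobian_determinant_N4_general
    (k₁ k₂ k₃ k₄ k₅ k₆ k₇ k₈ k₉ : ℝ)
    (hk₁ : 0 < k₁) (hk₂ : 0 < k₂) (hk₃ : 0 < k₃) (hk₄ : 0 < k₄)
    (hk₆ : 0 < k₆) (hk₈ : 0 < k₈)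
    (x : Fin 3 → ℝ) (hx : ∀ i, 0 < x i)
    (F : (Fin 3 → ℝ) → (Fin 3 → ℝ))
    (hF : F = fun x =>
      ![k₅ - k₄ * x 0 - k₁ * x 0 * x 1 + k₂ * x 2 - k₃ * x 0,
        k₇ - k₆ * x 1 - k₁ * x 0 * x 1 + k₂ * x 2 + 2 * k₃ * x 0,
        k₉ - k₈ * x 2 + k₁ * x 0 * x 1 - k₂ * x 2])
    (J : Matrix (Fin 3) (Fin 3) ℝ)
    (hJ : J = Matrix.of fun i j => fderiv ℝ F x (Pi.single j 1) i) :
    J.det = -(k₄ * k₆ * k₈ + k₂ * k₄ * k₆ + k₁ * k₄ * k₈ * x 0 + k₁ * k₆ * k₈ * x 1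
        + k₃ * k₆ * k₈ + k₂ * k₃ * k₆ + 3 * k₁ * k₃ * k₈ * x 0) ∧
      J.det < 0 := by
  set A : Matrix (Fin 3) (Fin 3) ℝ := !![-(k₄ + k₃), 0, k₂; 2 * k₃, -k₆, k₂; 0, 0, -(k₈ + k₂)]
  set ν : Fin 3 → ℝ := ![-1, -1, 1]
  have hF_eq : F = fun y => ![k₅, k₇, k₉] + A *ᵥ y + (k₁ * (y 0 * y 1)) • ν := by
    subst hF
    funext y i
    fin_cases i <;> simp [A, ν, dotProduct, Fin.sum_univ_three] <;> ring
  have hJ_eq : J = !![-(k₄ + k₃) - k₁ * x 1, -(k₁ * x 0), k₂;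
      2 * k₃ - k₁ * x 1, -k₆ - k₁ * x 0, k₂;
      k₁ * x 1, k₁ * x 0, -(k₈ + k₂)] := by
    rw [hJ, hF_eq, jacobian_eq_of_hasFDerivAt (hasFDerivAt_mulVec_add_bimolecular ..)]
    ext i j
    simp only [Matrix.add_apply, Matrix.smul_apply, vecMulVec_apply]
    fin_cases i <;> fin_cases j <;> simp [A, ν] <;> ring
  have hdet : J.det = -(k₄ * k₆ * k₈ + k₂ * k₄ * k₆ + k₁ * k₄ * k₈ * x 0 + k₁ * k₆ * k₈ * x 1
      + k₃ * k₆ * k₈ + k₂ * k₃ * k₆ + 3 * k₁ * k₃ * k₈ * x 0) := by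
    rw [hJ_eq, det_fin_three]
    simp only [of_apply, cons_val', cons_val_zero, cons_val_one, cons_val, cons_val_fin_one]
    ring
  have hx₀ := hx 0
  have hx₁ := hx 1
  exact ⟨hdet, hdet ▸ neg_neg_of_pos (by positivity)⟩

/-- The determinant of the Jacobian of the right-hand side of system (N4) equals
`−(k₄k₆k₈ + k₂k₄k₆ + k₁k₄k₈x₁ + k₁k₆k₈x₂ + k₃k₆k₈ + k₂k₃k₆ + 3k₁k₃k₈x₁)`,
and in particular is strictly negative on the positive orthant for all positive rate
constants. -/
theorem jacobian_determinant_N4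
    (k₁ k₂ k₃ k₄ k₅ k₆ k₇ k₈ k₉ : ℝ)
    (hk₁ : 0 < k₁) (hk₂ : 0 < k₂) (hk₃ : 0 < k₃) (hk₄ : 0 < k₄) (hk₅ : 0 < k₅)
    (hk₆ : 0 < k₆) (hk₇ : 0 < k₇) (hk₈ : 0 < k₈) (hk₉ : 0 < k₉)
    (x : Fin 3 → ℝ) (hx : ∀ i, 0 < x i)
    (F : (Fin 3 → ℝ) → (Fin 3 → ℝ))
    (hF : F = fun x =>
      ![k₅ - k₄ * x 0 - k₁ * x 0 * x 1 + k₂ * x 2 - k₃ * x 0,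
        k₇ - k₆ * x 1 - k₁ * x 0 * x 1 + k₂ * x 2 + 2 * k₃ * x 0,
        k₉ - k₈ * x 2 + k₁ * x 0 * x 1 - k₂ * x 2])
    (J : Matrix (Fin 3) (Fin 3) ℝ)
    (hJ : J = Matrix.of fun i j => fderiv ℝ F x (Pi.single j 1) i) :
    J.det = -(k₄ * k₆ * k₈ + k₂ * k₄ * k₆ + k₁ * k₄ * k₈ * x 0 + k₁ * k₆ * k₈ * x 1
        + k₃ * k₆ * k₈ + k₂ * k₃ * k₆ + 3 * k₁ * k₃ * k₈ * x 0) ∧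
      J.det < 0 :=
  jacobian_determinant_N4_general k₁ k₂ k₃ k₄ k₅ k₆ k₇ k₈ k₉ hk₁ hk₂ hk₃ hk₄ hk₆ hk₈ x hx F hF J hJ
end

section
/- If a mass-action system admits a complex-balanced steady state, then the underlying reaction network is weakly reversible (every reaction lies in a directed cycle of the reaction graph; equivalently each connected component is strongly connected). Equivalently: if the network is not weakly reversible, no positive state can be complex-balanced. -/
open Classical in
/-- If a mass-action system admits a complex-balanced steady state, then the network is
weakly reversible: for every reaction there is a directed path in the reaction graph from
its target complex back to its source complex (so every reaction lies on a directed
cycle). -/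
theorem complex_balanced_implies_weakly_reversible
    {n : ℕ} {R : Type*} [Fintype R]
    (src tgt : R → (Fin n → ℝ)) (k : R → ℝ) (hk : ∀ r, 0 < k r)
    (x₀ : Fin n → ℝ) (hx₀ : ∀ i, 0 < x₀ i)
    (hcb : ∀ y : Fin n → ℝ,
      ∑ r, (if src r = y then k r * ∏ i, x₀ i ^ (src r i) else 0)
        = ∑ r, (if tgt r = y then k r * ∏ i, x₀ i ^ (src r i) else 0)) :
    ∀ r : R, Relation.ReflTransGen
      (fun y y' : Fin n → ℝ => ∃ e : R, src e = y ∧ tgt e = y') (tgt r) (src r) := by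
  classical
  intro r₀
  set step := fun y y' : Fin n → ℝ => ∃ e : R, src e = y ∧ tgt e = y' with hstep
  set S : Set (Fin n → ℝ) := {y | Relation.ReflTransGen step (tgt r₀) y} with hS
  set w : R → ℝ := fun r => k r * ∏ i, x₀ i ^ (src r i) with hw
  have hwpos : ∀ r, 0 < w r := fun r =>
    mul_pos (hk r) (Finset.prod_pos fun i _ => Real.rpow_pos_of_pos (hx₀ i) _)
  have hclosed : ∀ e : R, src e ∈ S → tgt e ∈ S := fun e he =>
    Relation.ReflTransGen.tail he ⟨e, rfl, rfl⟩
  set V : Finset (Fin n → ℝ) :=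
    Finset.image src Finset.univ ∪ Finset.image tgt Finset.univ with hV
  set T : Finset (Fin n → ℝ) := V.filter (· ∈ S) with hT
  have hsrcV : ∀ e : R, src e ∈ V := fun e =>
    Finset.mem_union_left _ (Finset.mem_image_of_mem src (Finset.mem_univ e))
  have htgtV : ∀ e : R, tgt e ∈ V := fun e =>
    Finset.mem_union_right _ (Finset.mem_image_of_mem tgt (Finset.mem_univ e))
  have hmemT : ∀ z : Fin n → ℝ, z ∈ V → (z ∈ T ↔ z ∈ S) := by
    intro z hz
    simp [hT, Finset.mem_filter, hz]
  have hsum : ∑ y ∈ T, ∑ r, (if src r = y then w r else 0)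
      = ∑ y ∈ T, ∑ r, (if tgt r = y then w r else 0) :=
    Finset.sum_congr rfl fun y _ => hcb y
  have hL : ∀ r : R, (∑ y ∈ T, if src r = y then w r else 0)
      = if src r ∈ S then w r else 0 := by
    intro r
    rw [Finset.sum_ite_eq T (src r) (fun _ => w r)]
    simp [hmemT _ (hsrcV r)]
  have hR : ∀ r : R, (∑ y ∈ T, if tgt r = y then w r else 0)
      = if tgt r ∈ S then w r else 0 := by
    intro r
    rw [Finset.sum_ite_eq T (tgt r) (fun _ => w r)]
    simp [hmemT _ (htgtV r)]
  have hsum2 : (∑ r, if src r ∈ S then w r else 0)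
      = ∑ r, if tgt r ∈ S then w r else 0 :=
    ((Finset.sum_congr rfl fun r _ => (hL r).symm).trans Finset.sum_comm).trans
      (hsum.trans (Finset.sum_comm.trans (Finset.sum_congr rfl fun r _ => hR r)))
  have hle : ∀ r ∈ Finset.univ, (if src r ∈ S then w r else 0)
      ≤ (if tgt r ∈ S then w r else 0) := by
    intro r _
    by_cases h : src r ∈ S
    · simp [h, hclosed r h]
    · simp only [h, if_neg, if_false]
      split <;> [exact (hwpos r).le; exact le_refl 0]
  have heq := (Finset.sum_eq_sum_iff_of_le hle).mp hsum2 r₀ (Finset.mem_univ r₀)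
  have htgtS : tgt r₀ ∈ S := Relation.ReflTransGen.refl
  rw [if_pos htgtS] at heq
  by_contra hns
  rw [if_neg (show src r₀ ∉ S from hns)] at heq
  exact absurd heq.symm (ne_of_gt (hwpos r₀))
end

section
/- In a finite directed graph where each edge e carries a positive weight w(e) such that at every vertex the total weight of incoming edges equals the total weight of outgoing edges, every edge lies on a directed cycle. -/
open Classical in
/-- In a finite directed graph carrying positive edge weights balanced at every vertex
(total incoming weight = total outgoing weight), every edge lies on a directed cycle:
there is a directed path from the head of each edge back to its tail. -/
theorem balanced_positive_flow_every_edge_on_cycle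
    {V E : Type*} [Fintype V] [Fintype E]
    (s t : E → V) (w : E → ℝ) (hw : ∀ e, 0 < w e)
    (hbal : ∀ v : V, ∑ e, (if t e = v then w e else 0) = ∑ e, (if s e = v then w e else 0)) :
    ∀ e : E, Relation.ReflTransGen
      (fun u v : V => ∃ e' : E, s e' = u ∧ t e' = v) (t e) (s e) := by
  intro e
  set r : V → Prop := fun v =>
    Relation.ReflTransGen (fun u v : V => ∃ e' : E, s e' = u ∧ t e' = v) (t e) v with hrdef
  by_contra h
  have hstep : ∀ e' : E, r (s e') → r (t e') := fun e' hre' =>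
    hre'.tail ⟨e', rfl, rfl⟩
  have swap : ∀ f : E → V, ∑ e', (if r (f e') then w e' else 0)
      = ∑ v, if r v then (∑ e', if f e' = v then w e' else 0) else 0 := by
    intro f
    have : ∀ v : V, (if r v then (∑ e', if f e' = v then w e' else 0) else 0)
        = ∑ e', if f e' = v then (if r v then w e' else 0) else 0 := by
      intro v; split <;> simp
    simp only [this]
    rw [Finset.sum_comm]
    refine Finset.sum_congr rfl fun e' _ => ?_
    rw [Finset.sum_ite_eq (Finset.univ) (f e') (fun v => if r v then w e' else 0)]
    simp
  have key : ∑ e', (if r (t e') then w e' else 0) = ∑ e', (if r (s e') then w e' else 0) := by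
    rw [swap t, swap s]
    refine Finset.sum_congr rfl fun v _ => ?_
    split
    · exact hbal v
    · rfl
  have hlt : ∑ e', (if r (s e') then w e' else 0) < ∑ e', (if r (t e') then w e' else 0) := by
    refine Finset.sum_lt_sum (fun e' _ => ?_) ⟨e, Finset.mem_univ e, ?_⟩
    · split
      · next hre' => rw [if_pos (hstep e' hre')]
      · split
        · exact (hw e').le
        · exact le_refl 0
    · rw [if_neg h, if_pos (Relation.ReflTransGen.refl)]
      exact hw e
  exact absurd key (ne_of_gt hlt)
end
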